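/- arXiv:2209.05173 — 2 statements merged into one kernel-verified Lean document; each statement's English description precedes it below -/
import Mathlib

section
/- Let c, p ∈ ℝ² and let r_c > 0 with R := dist(p, c) > r_c (the reference point p lies outside the disk). Let X be a random point distributed uniformly on the closed disk of center c and radius r_c. Then the cumulative distribution function F(r) = P(dist(X, p) ≤ r) is differentiable at every r with R − r_c < r < R + r_c, and its derivative (the probability density of the distance dist(X, p)) equals f(r) = (2r/(π r_c²)) · arccos((R² + r² − r_c²)/(2 R r)). -/
/-!
Move `p` to `0` and `c` to the point `R` of the real axis of `ℂ` by an affine isometry. In polar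
coordinates `z = s e^{iθ}` the law of cosines shows that the circle `‖z‖ = s` meets the disk
in the arc `|θ| ≤ arccos ((R² + s² - r_c²) / (2 R s))`, so
`π r_c² F r = ∫₀ʳ 2 s arccos (…) ds`. The integrand is continuous at every `s > 0`, and the
fundamental theorem of calculus gives the density.
-/

open MeasureTheory Real Set Metric

theorem Complex.volume_eq_lintegral_polarCoord {S : Set ℂ} (hS : MeasurableSet S) :
    volume S = ∫⁻ s in Ioi 0, ENNReal.ofReal s *
      volume.restrict (Ioo (-π) π) ((fun θ ↦ Complex.polarCoord.symm (s, θ)) ⁻¹' S) := by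
  have hcont : Continuous Complex.polarCoord.symm := by
    rw [funext Complex.polarCoord_symm_apply]
    fun_prop
  have hmeas : Measurable fun p : ℝ × ℝ ↦
      ENNReal.ofReal p.1 • S.indicator (1 : ℂ → ENNReal) (Complex.polarCoord.symm p) := by
    fun_prop
  rw [← lintegral_indicator_one hS, ← Complex.lintegral_comp_polarCoord_symm,
    _root_.polarCoord_target, Measure.volume_eq_prod, ← Measure.prod_restrict,
    lintegral_prod _ hmeas.aemeasurable]
  refine lintegral_congr fun s ↦ ?_
  simp only [smul_eq_mul]
  rw [lintegral_const_mul _ (by fun_prop), ← lintegral_indicator_one (hS.preimage (by fun_prop))]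
  rfl

theorem Complex.norm_polarCoord_symm_sub_ofReal_sq (s θ R : ℝ) :
    ‖Complex.polarCoord.symm (s, θ) - R‖ ^ 2 = s ^ 2 + R ^ 2 - 2 * R * s * Real.cos θ := by
  rw [Complex.sq_norm, Complex.normSq_apply]
  simp only [Complex.polarCoord_symm_apply, ofReal_cos, ofReal_sin, sub_re, mul_re, ofReal_re,
    add_re, cos_ofReal_re, sin_ofReal_re, I_re, mul_zero, sin_ofReal_im, I_im, mul_one, sub_self,
    add_zero, ofReal_im, add_im, cos_ofReal_im, mul_im, zero_add, zero_mul, sub_zero, sub_im]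
  linear_combination s ^ 2 * Real.sin_sq_add_cos_sq θ

theorem Complex.polarCoord_symm_mem_closedBall_iff {R ρ s : ℝ} (hR : 0 < R) (hρ : 0 ≤ ρ)
    (hs : 0 < s) (θ : ℝ) :
    Complex.polarCoord.symm (s, θ) ∈ closedBall (R : ℂ) ρ ↔
      (R ^ 2 + s ^ 2 - ρ ^ 2) / (2 * R * s) ≤ Real.cos θ := by
  rw [mem_closedBall, dist_eq_norm, ← sq_le_sq₀ (norm_nonneg _) hρ,
    norm_polarCoord_symm_sub_ofReal_sq, div_le_iff₀ (by positivity)]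
  constructor <;> intro h <;> linarith

-- `arccos` is clamped to `π` below `-1` and to `0` above `1`, so no range condition on `t`.
theorem volume_restrict_Ioo_setOf_le_cos (t : ℝ) :
    volume.restrict (Ioo (-π) π) {θ | t ≤ cos θ} = ENNReal.ofReal (2 * arccos t) := by
  rcases le_or_gt t (-1) with ht | ht
  · have : {θ | t ≤ cos θ} = univ := eq_univ_of_forall fun θ ↦ ht.trans (neg_one_le_cos θ)
    rw [this, Measure.restrict_apply_univ, volume_Ioo, arccos_eq_pi.2 ht]
    ring_nf
  rcases le_or_gt t 1 with ht' | ht'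
  · have ha : arccos t < π := arccos_lt_pi.2 ht
    have hset : {θ | t ≤ cos θ} ∩ Ioo (-π) π = Icc (-arccos t) (arccos t) := by
      ext θ
      have hcos {x : ℝ} (hx : |x| ≤ π) : t ≤ cos x ↔ |x| ≤ arccos t := by
        rw [← cos_abs]
        nth_rw 1 [← cos_arccos ht.le ht']
        exact strictAntiOn_cos.le_iff_ge ⟨arccos_nonneg t, ha.le⟩ ⟨abs_nonneg x, hx⟩
      simp only [mem_inter_iff, mem_ofPred_eq, mem_Icc, mem_Ioo, ← abs_le, ← abs_lt]
      exact ⟨fun ⟨h, hθ⟩ ↦ (hcos hθ.le).1 h,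
        fun h ↦ ⟨(hcos (h.trans ha.le)).2 h, h.trans_lt ha⟩⟩
    rw [Measure.restrict_apply (measurableSet_le measurable_const continuous_cos.measurable),
      hset, volume_Icc]
    ring_nf
  · have : {θ | t ≤ cos θ} = ∅ := eq_empty_of_forall_notMem fun θ h ↦
      (cos_le_one θ).not_gt (ht'.trans_le h)
    rw [this, measure_empty, arccos_eq_zero.2 ht'.le]
    simp

/-- The length of the arc of the circle `‖z‖ = s` in `ℂ` lying in `closedBall (R : ℂ) ρ`. -/
noncomputable def arcLengthInDisk (R ρ s : ℝ) : ℝ :=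
  2 * s * arccos ((R ^ 2 + s ^ 2 - ρ ^ 2) / (2 * R * s))

section arcLengthInDisk

variable {R ρ : ℝ}

theorem measurable_arcLengthInDisk : Measurable (arcLengthInDisk R ρ) := by
  unfold arcLengthInDisk
  fun_prop

theorem arcLengthInDisk_nonneg {s : ℝ} (hs : 0 ≤ s) : 0 ≤ arcLengthInDisk R ρ s :=
  mul_nonneg (by positivity) (arccos_nonneg _)

theorem continuousAt_arcLengthInDisk {s : ℝ} (hR : R ≠ 0) (hs : s ≠ 0) :
    ContinuousAt (arcLengthInDisk R ρ) s := by
  unfold arcLengthInDisk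
  fun_prop (disch := positivity)

theorem intervalIntegrable_arcLengthInDisk (r : ℝ) :
    IntervalIntegrable (arcLengthInDisk R ρ) volume 0 r := by
  refine (Measure.integrableOn_of_bounded (M := 2 * |r| * π) measure_Icc_lt_top.ne
    measurable_arcLengthInDisk.aestronglyMeasurable ?_).intervalIntegrable
  refine (ae_restrict_iff' measurableSet_Icc).2 (ae_of_all _ fun s hs ↦ ?_)
  have hsr : |s| ≤ |r| := by simpa using abs_sub_left_of_mem_uIcc hs
  rw [arcLengthInDisk, norm_mul, norm_mul, Real.norm_eq_abs, Real.norm_eq_abs, Real.norm_eq_abs,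
    abs_two, abs_of_nonneg (arccos_nonneg _)]
  gcongr
  exacts [arccos_nonneg _, arccos_le_pi _]

theorem hasDerivAt_integral_arcLengthInDisk {r : ℝ} (hR : R ≠ 0) (hr : r ≠ 0) :
    HasDerivAt (fun u ↦ ∫ s in 0..u, arcLengthInDisk R ρ s) (arcLengthInDisk R ρ r) r :=
  intervalIntegral.integral_hasDerivAt_right (intervalIntegrable_arcLengthInDisk r)
    measurable_arcLengthInDisk.stronglyMeasurable.stronglyMeasurableAtFilter
    (continuousAt_arcLengthInDisk hR hr)

theorem volume_closedBall_zero_inter_closedBall_ofReal (hR : 0 < R) (hρ : 0 ≤ ρ) (r : ℝ) :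
    volume (closedBall (0 : ℂ) r ∩ closedBall (R : ℂ) ρ) =
      ∫⁻ s in Ioc 0 r, ENNReal.ofReal (arcLengthInDisk R ρ s) := by
  rw [Complex.volume_eq_lintegral_polarCoord
      (measurableSet_closedBall.inter measurableSet_closedBall),
    ← Ioi_inter_Iic, inter_comm (Ioi 0), ← Measure.restrict_restrict measurableSet_Iic,
    ← lintegral_indicator measurableSet_Iic]
  refine setLIntegral_congr_fun measurableSet_Ioi fun s (hs : 0 < s) ↦ ?_
  by_cases hsr : s ≤ r
  · have hpre : (fun θ ↦ Complex.polarCoord.symm (s, θ)) ⁻¹'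
        (closedBall 0 r ∩ closedBall (R : ℂ) ρ) =
          {θ | (R ^ 2 + s ^ 2 - ρ ^ 2) / (2 * R * s) ≤ cos θ} := by
      ext θ
      simp only [mem_preimage, mem_inter_iff, mem_closedBall_zero_iff,
        Complex.norm_polarCoord_symm, abs_of_pos hs, hsr, true_and, mem_ofPred_eq,
        Complex.polarCoord_symm_mem_closedBall_iff hR hρ hs]
    rw [hpre, volume_restrict_Ioo_setOf_le_cos, indicator_of_mem (mem_Iic.2 hsr),
      arcLengthInDisk, ← ENNReal.ofReal_mul hs.le]
    ring_nf
  · have hpre : (fun θ ↦ Complex.polarCoord.symm (s, θ)) ⁻¹'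
        (closedBall 0 r ∩ closedBall (R : ℂ) ρ) = ∅ := by
      ext θ
      simp [abs_of_pos hs, hsr]
    rw [hpre, indicator_of_notMem (fun h ↦ hsr (mem_Iic.1 h))]
    simp

end arcLengthInDisk

section TwoDimensional

variable {E : Type*} [NormedAddCommGroup E] [InnerProductSpace ℝ E] [FiniteDimensional ℝ E]

theorem exists_linearIsometryEquiv_complex_apply_eq_norm (h : Module.finrank ℝ E = 2) (v : E) :
    ∃ ℓ : E ≃ₗᵢ[ℝ] ℂ, ℓ v = ‖v‖ := by
  let ℓ₀ : E ≃ₗᵢ[ℝ] ℂ :=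
    (stdOrthonormalBasis ℝ E).equiv Complex.orthonormalBasisOneI (finCongr h)
  refine ⟨ℓ₀.trans (rotation (Circle.exp (-Complex.arg (ℓ₀ v)))), ?_⟩
  rw [LinearIsometryEquiv.trans_apply, rotation_apply, Circle.coe_exp, ← ℓ₀.norm_map]
  conv_lhs => arg 2; rw [← Complex.norm_mul_exp_arg_mul_I (ℓ₀ v)]
  rw [mul_left_comm, ← Complex.exp_add]
  simp

variable [MeasurableSpace E] [BorelSpace E]

theorem volume_closedBall_inter_closedBall_eq_complex (h : Module.finrank ℝ E = 2) (p c : E)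
    (r ρ : ℝ) :
    volume (closedBall p r ∩ closedBall c ρ) =
      volume (closedBall (0 : ℂ) r ∩ closedBall (dist p c : ℂ) ρ) := by
  obtain ⟨ℓ, hℓ⟩ := exists_linearIsometryEquiv_complex_apply_eq_norm h (c - p)
  have hf : MeasurePreserving (fun x ↦ ℓ (x - p)) volume volume :=
    ℓ.measurePreserving.comp (measurePreserving_sub_right volume p)
  have hpre : (fun x ↦ ℓ (x - p)) ⁻¹' (closedBall 0 r ∩ closedBall (dist p c : ℂ) ρ) =
      closedBall p r ∩ closedBall c ρ := by
    ext x
    simp only [mem_preimage, mem_inter_iff, mem_closedBall, dist_comm p c, dist_eq_norm, ← hℓ,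
      ← map_sub, LinearIsometryEquiv.norm_map, sub_zero, sub_sub_sub_cancel_right]
  rw [← hpre, hf.measure_preimage
    (measurableSet_closedBall.inter measurableSet_closedBall).nullMeasurableSet]

theorem volume_closedBall_inter_closedBall_eq_integral (h : Module.finrank ℝ E = 2) {p c : E}
    (hpc : p ≠ c) {r ρ : ℝ} (hr : 0 ≤ r) (hρ : 0 ≤ ρ) :
    volume (closedBall p r ∩ closedBall c ρ) =
      ENNReal.ofReal (∫ s in 0..r, arcLengthInDisk (dist p c) ρ s) := by
  have hnonneg : 0 ≤ᵐ[volume.restrict (Ioc 0 r)] arcLengthInDisk (dist p c) ρ :=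
    (ae_restrict_iff' measurableSet_Ioc).2 <|
      ae_of_all _ fun s hs ↦ arcLengthInDisk_nonneg hs.1.le
  rw [volume_closedBall_inter_closedBall_eq_complex h,
    volume_closedBall_zero_inter_closedBall_ofReal (dist_pos.2 hpc) hρ,
    intervalIntegral.integral_of_le hr,
    ofReal_integral_eq_lintegral_ofReal (intervalIntegrable_arcLengthInDisk r).1 hnonneg]

end TwoDimensional

open Filter Topology in
theorem uniform_disk_distance_density_outside_general
    (c p : EuclideanSpace ℝ (Fin 2)) (r_c : ℝ) (hrc : 0 < r_c)
    (R : ℝ) (hR : R = dist p c) (hout : r_c < R)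
    (μ : Measure (EuclideanSpace ℝ (Fin 2)))
    (hμ : μ = (ENNReal.ofReal (π * r_c ^ 2))⁻¹ •
      (volume.restrict (Metric.closedBall c r_c)))
    (F : ℝ → ℝ) (hF : ∀ r, F r = (μ {x | dist x p ≤ r}).toReal)
    (r : ℝ) (hr₁ : R - r_c < r) :
    HasDerivAt F (2 * r / (π * r_c ^ 2) *
      Real.arccos ((R ^ 2 + r ^ 2 - r_c ^ 2) / (2 * R * r))) r := by
  have hR0 : 0 < R := hrc.trans hout
  have hr0 : 0 < r := by linarith
  have hpc : p ≠ c := dist_pos.1 (hR ▸ hR0)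
  have hF_eq :
      F =ᶠ[𝓝 r] fun u ↦ (π * r_c ^ 2)⁻¹ * ∫ s in 0..u, arcLengthInDisk R r_c s := by
    filter_upwards [lt_mem_nhds hr0] with u hu
    have hball : {x | dist x p ≤ u} = closedBall p u := rfl
    rw [hF, hball, hμ, Measure.smul_apply, Measure.restrict_apply measurableSet_closedBall,
      smul_eq_mul,
      volume_closedBall_inter_closedBall_eq_integral finrank_euclideanSpace_fin hpc hu.le hrc.le,
      ENNReal.toReal_mul, ENNReal.toReal_inv, ENNReal.toReal_ofReal (by positivity),
      ENNReal.toReal_ofReal (intervalIntegral.integral_nonneg hu.le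
        fun s hs ↦ arcLengthInDisk_nonneg hs.1), hR]
  have hdensity : 2 * r / (π * r_c ^ 2) * arccos ((R ^ 2 + r ^ 2 - r_c ^ 2) / (2 * R * r)) =
      (π * r_c ^ 2)⁻¹ * arcLengthInDisk R r_c r := by
    rw [arcLengthInDisk]
    ring
  rw [hdensity]
  exact ((hasDerivAt_integral_arcLengthInDisk hR0.ne' hr0.ne').const_mul _).congr_of_eventuallyEq
    hF_eq

/-- Lemma 1 of the paper, case `R > r_c`.
Let `X` be a point uniformly distributed on the closed disk of center `c` and radius `r_c`
in `ℝ²` (law: Lebesgue measure restricted to the disk, normalized by its area `π r_c²`).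
If the reference point `p` lies outside the disk (`R := dist p c > r_c`), then the CDF
`F r = P(dist X p ≤ r)` is differentiable at every `r ∈ (R − r_c, R + r_c)` with derivative
`(2 r / (π r_c²)) · arccos ((R² + r² − r_c²) / (2 R r))`. -/
theorem uniform_disk_distance_density_outside
    (c p : EuclideanSpace ℝ (Fin 2)) (r_c : ℝ) (hrc : 0 < r_c)
    (R : ℝ) (hR : R = dist p c) (hout : r_c < R)
    (μ : Measure (EuclideanSpace ℝ (Fin 2)))
    (hμ : μ = (ENNReal.ofReal (π * r_c ^ 2))⁻¹ •
      (volume.restrict (Metric.closedBall c r_c)))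
    (F : ℝ → ℝ) (hF : ∀ r, F r = (μ {x | dist x p ≤ r}).toReal)
    (r : ℝ) (hr₁ : R - r_c < r) (hr₂ : r < R + r_c) :
    HasDerivAt F (2 * r / (π * r_c ^ 2) *
      Real.arccos ((R ^ 2 + r ^ 2 - r_c ^ 2) / (2 * R * r))) r :=
  uniform_disk_distance_density_outside_general c p r_c hrc R hR hout μ hμ F hF r hr₁
end

section
/- Let a, b ∈ ℝ² with L := dist(a, b) > 0, let r > 0, and let [a, b] denote the closed line segment joining a and b. For every point P ∈ ℝ² with infDist(P, [a, b]) = r, one has dist(a, P) + dist(P, b) ≤ L + 2r. Moreover, equality holds for the point P₁ = b + (r/L)·(b − a), which lies on the extension of the segment beyond b and satisfies infDist(P₁, [a, b]) = r. -/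
open Real Metric

/-!
Every point `Q` of the segment splits it as `dist a Q + dist Q b = dist a b`, so the triangle
inequality through `Q` bounds the detour through `P` by `dist a b + 2 * dist P Q`; taking `Q`
nearest to `P` gives the bound `L + 2r`. On the extension beyond `b` both triangle inequalities
through `b` are equalities, so the bound is attained there, and the bound itself then shows that
`b` is a nearest point of the segment.
-/

section

variable {E : Type*} [SeminormedAddCommGroup E] [NormedSpace ℝ E]

theorem dist_add_dist_le_dist_add_two_mul_infDist_segment (a b P : E) :
    dist a P + dist P b ≤ dist a b + 2 * infDist P (segment ℝ a b) := by
  have hne : (segment ℝ a b).Nonempty := ⟨a, left_mem_segment ℝ a b⟩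
  have hle : (dist a P + dist P b - dist a b) / 2 ≤ infDist P (segment ℝ a b) := by
    refine (le_infDist hne).2 fun Q hQ => ?_
    have hsplit := dist_add_dist_of_mem_segment hQ
    have h₁ := dist_triangle a Q P
    have h₂ := dist_triangle P Q b
    rw [dist_comm Q P] at h₁
    linarith
  linarith

variable {a b : E} {t : ℝ}

theorem dist_extension_beyond_right (ht : 0 ≤ t) :
    dist (b + t • (b - a)) b = t * dist a b := by
  rw [dist_eq_norm, add_sub_cancel_left, norm_smul, norm_of_nonneg ht, ← dist_eq_norm,
    dist_comm]

theorem dist_left_extension_beyond_right (ht : 0 ≤ t) :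
    dist a (b + t • (b - a)) = (1 + t) * dist a b := by
  have hvec : b + t • (b - a) - a = (1 + t) • (b - a) := by
    rw [add_smul, one_smul]; abel
  rw [dist_comm, dist_eq_norm, hvec, norm_smul, norm_of_nonneg (by linarith), ← dist_eq_norm,
    dist_comm]

theorem infDist_extension_beyond_right_segment (ht : 0 ≤ t) :
    infDist (b + t • (b - a)) (segment ℝ a b) = t * dist a b := by
  apply le_antisymm
  · rw [← dist_extension_beyond_right ht]
    exact infDist_le_dist_of_mem (right_mem_segment ℝ a b)
  · have hbound := dist_add_dist_le_dist_add_two_mul_infDist_segment a b (b + t • (b - a))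
    rw [dist_left_extension_beyond_right ht, dist_extension_beyond_right ht] at hbound
    linarith

end

/-- Remark 3, Fig. 7(b): longest detour.
Among all points `P` at distance `r` from the segment `[a, b]` (of length `L > 0`), the
detour length `dist a P + dist P b` is at most `L + 2r`, with equality at the point
`P₁ = b + (r/L) • (b − a)` on the extension of the segment beyond `b`; moreover `P₁`
indeed lies at distance `r` from the segment. -/
theorem longest_detour_segment
    (a b : EuclideanSpace ℝ (Fin 2)) (L : ℝ) (hL : L = dist a b) (hLpos : 0 < L)
    (r : ℝ) (hr : 0 < r) :
    (∀ P : EuclideanSpace ℝ (Fin 2), Metric.infDist P (segment ℝ a b) = r →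
      dist a P + dist P b ≤ L + 2 * r) ∧
    (Metric.infDist (b + (r / L) • (b - a)) (segment ℝ a b) = r ∧
      dist a (b + (r / L) • (b - a)) + dist (b + (r / L) • (b - a)) b = L + 2 * r) := by
  subst hL
  have ht : 0 ≤ r / dist a b := (div_pos hr hLpos).le
  have hscale : r / dist a b * dist a b = r := div_mul_cancel₀ r hLpos.ne'
  refine ⟨fun P hP => ?_, ?_, ?_⟩
  · simpa [hP] using dist_add_dist_le_dist_add_two_mul_infDist_segment a b P
  · rw [infDist_extension_beyond_right_segment ht, hscale]
  · rw [dist_left_extension_beyond_right ht, dist_extension_beyond_right ht]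
    linarith
end
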